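/- Let n ≥ 4 be even, q = 2^n, α ∈ 𝔽_q^*, and let ω be a fixed element of 𝔽_4 \ 𝔽_2 regarded as an element of 𝔽_q. Then for a ∈ 𝔽_q^*, the derivative D_aF_{0,α} is 2-to-1 if and only if a ∉ {0, α, αω, αω²} and Tr(α/(a+α)) = Tr(α/a) = 1. Equivalently, R-Spec_q(F_{0,α}) = {a ∈ 𝔽_q \ {0, α, αω, αω²} : Tr(α/(a+α)) = Tr(α/a) = 1}. -/

import Mathlib

/-!
Fix `a ∉ {0, α}`. Off the two pairs `{0, a}` and `{α, α + a}` the derivative `D_aF_{0,α}`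
agrees with that of the inverse map, `x⁻¹ + (x + a)⁻¹ = a / (x (x + a))`, which is 2-to-1; on the
two pairs it takes the values `α⁻¹ + a⁻¹` and `(α + a)⁻¹`. A value `c ≠ 0` is taken by the inverse
part iff `x² + a x = a / c` is solvable, i.e. iff `Tr (1 / (a c)) = 0`, because `Tr` vanishes
exactly on the image of `t ↦ t² + t` (that image has `q/2` elements and lies among the at most
`q/2` roots of the trace polynomial). So `D_aF_{0,α}` is 2-to-1 iff the two exceptional values
differ, which fails exactly when `a² + aα + α² = 0`, i.e. `a ∈ {αω, αω²}`, and neither is taken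
by the inverse part, which are the two trace conditions (using `Tr 1 = 0` for even `n`).
For `a = α`, the derivative takes the value `α⁻¹` at `0` and at `αω`.
-/

namespace APNPaper

open Finset

variable {F : Type*} [Field F] [Fintype F] [DecidableEq F]

/-- `δ_G(a,b)`: the number of `x` with `D_aG(x) = G(x) + G(x+a) = b`. -/
def delta (G : F → F) (a b : F) : ℕ :=
  (Finset.univ.filter fun x : F => G x + G (x + a) = b).card

/-- `∇_G(a,x) = δ_G(a, D_aG(x))`. -/
def nabla (G : F → F) (a x : F) : ℕ := delta G a (G x + G (x + a))

/-- `G` is almost perfect nonlinear. -/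
def IsAPN (G : F → F) : Prop := ∀ a : F, a ≠ 0 → ∀ b : F, delta G a b ≤ 2

/-- The derivative `D_aG` is 2-to-1, i.e. `G` satisfies property `(p_a)`. -/
def TwoToOne (G : F → F) (a : F) : Prop :=
  ∀ b : F, delta G a b = 0 ∨ delta G a b = 2

instance instDecTwoToOne (G : F → F) (a : F) : Decidable (TwoToOne G a) := by
  unfold TwoToOne; infer_instance

/-- The row spectrum `R-Spec_q(G)`. -/
def RSpec (G : F → F) : Finset F :=
  (Finset.univ.erase (0 : F)).filter fun a => TwoToOne G a

/-- `S_a = {x : ∇_G(a,x) = 2}`. -/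
def Sset (G : F → F) (a : F) : Finset F :=
  Finset.univ.filter fun x : F => nabla G a x = 2

/-- `w_{S_a^c} = Σ_{b : δ_G(a,b) > 2} (δ_G(a,b)/2)²`. -/
def wS (G : F → F) (a : F) : ℤ :=
  ∑ b : F, if 2 < delta G a b then ((delta G a b / 2 : ℕ) : ℤ) ^ 2 else 0

/-- `χ_a = 1` if `S_a = 𝔽_q`, and `0` otherwise. -/
def chi (G : F → F) (a : F) : ℤ :=
  if Sset G a = Finset.univ then 1 else 0

/-- `𝒟(G) = Σ_{a ≠ 0} (|S_a| − w_{S_a^c} + χ_a)`. -/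
def Dscr (G : F → F) : ℤ :=
  ∑ a ∈ Finset.univ.erase (0 : F), (((Sset G a).card : ℤ) - wS G a + chi G a)

/-- The APN-defect `APN-def(G) = q² − 1 − 𝒟(G)`. -/
def APNdef (G : F → F) : ℤ := (Fintype.card F : ℤ) ^ 2 - 1 - Dscr G

/-- The differential uniformity `δ_G`. -/
def diffUnif (G : F → F) : ℕ :=
  ((Finset.univ.erase (0 : F)) ×ˢ Finset.univ).sup fun p => delta G p.1 p.2

/-- The set of vanishing flats of `G`. -/
def VF (G : F → F) : Set (Finset F) :=
  {S | ∃ x y z : F, x ≠ y ∧ x ≠ z ∧ y ≠ z ∧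
    G x + G y + G z + G (x + y + z) = 0 ∧ S = ({x, y, z, x + y + z} : Finset F)}

/-- The absolute trace `Tr(z) = z + z² + ⋯ + z^{2^{n-1}}` (with values in `{0,1} ⊆ F`). -/
def Tr (n : ℕ) (z : F) : F := ∑ i ∈ Finset.range n, z ^ (2 ^ i)

/-- The modification `F_{0,α}` of the inverse function: the values of the inverse
function at `0` and `α` are swapped. -/
def Fmod (α : F) : F → F :=
  fun x => if x = 0 then α⁻¹ else if x = α then 0 else x⁻¹

section

variable {K : Type*} [Field K] [CharP K 2]

def Paired (a x y : K) : Prop := y = x ∨ y = x + a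

lemma Paired.symm {a x y : K} (h : Paired a x y) : Paired a y x := by
  rcases h with rfl | rfl
  · exact Or.inl rfl
  · exact Or.inr (CharTwo.add_cancel_right x a).symm

lemma Paired.trans {a x y z : K} (h₁ : Paired a x y) (h₂ : Paired a y z) : Paired a x z := by
  rcases h₁ with rfl | rfl <;> rcases h₂ with rfl | rfl
  · exact Or.inl rfl
  · exact Or.inr rfl
  · exact Or.inr rfl
  · exact Or.inl (CharTwo.add_cancel_right x a)

lemma not_paired_zero_iff {a x : K} : ¬Paired a 0 x ↔ x ≠ 0 ∧ x + a ≠ 0 := by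
  simp [Paired, CharTwo.add_eq_zero]

def derivative (G : K → K) (a x : K) : K := G x + G (x + a)

lemma derivative_eq_of_paired (G : K → K) {a x y : K} (h : Paired a x y) :
    derivative G a y = derivative G a x := by
  rcases h with rfl | rfl
  · rfl
  · rw [derivative, derivative, CharTwo.add_cancel_right, add_comm]

lemma forall_derivative_eq_imp_paired_iff (G : K → K) {a u v : K} (huv : ¬Paired a u v) :
    (∀ y, derivative G a y = derivative G a u → Paired a u y) ↔
      derivative G a v ≠ derivative G a u ∧
        ∀ y, ¬Paired a u y → ¬Paired a v y → derivative G a y ≠ derivative G a u := by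
  refine ⟨fun h => ⟨fun hv => huv (h v hv), fun y hu _ hy => hu (h y hy)⟩, ?_⟩
  rintro ⟨hvu, hgen⟩ y hy
  by_contra hu
  by_cases hv : Paired a v y
  · exact hvu (derivative_eq_of_paired G hv ▸ hy)
  · exact hgen y hu hv hy

variable [Fintype K] [DecidableEq K]

lemma twoToOne_iff {G : K → K} {a : K} (ha : a ≠ 0) :
    TwoToOne G a ↔ ∀ x y, derivative G a x = derivative G a y → Paired a x y := by
  have hpair (x : K) :
      ({x, x + a} : Finset K) ⊆ univ.filter (derivative G a · = derivative G a x) := by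
    intro y hy
    rw [mem_insert, mem_singleton] at hy
    exact mem_filter.mpr ⟨mem_univ y, derivative_eq_of_paired G hy⟩
  have hcard (x : K) : #({x, x + a} : Finset K) = 2 :=
    card_pair fun h => ha (by simpa using h)
  constructor
  · intro h x y hxy
    have hfiber : univ.filter (derivative G a · = derivative G a x) = {x, x + a} := by
      refine (eq_of_subset_of_card_le (hpair x) ?_).symm
      rcases h (derivative G a x) with h0 | h2
      · exact absurd h0 (card_ne_zero_of_mem (mem_filter.mpr ⟨mem_univ x, rfl⟩))
      · exact (hcard x).symm ▸ h2.le
    have hy : y ∈ univ.filter (derivative G a · = derivative G a x) := by simp [hxy]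
    rw [hfiber, mem_insert, mem_singleton] at hy
    exact hy
  · intro h b
    by_cases hb : ∃ x, derivative G a x = b
    · obtain ⟨x, rfl⟩ := hb
      have hfiber : univ.filter (derivative G a · = derivative G a x) = {x, x + a} := by
        ext y
        rw [mem_filter, mem_insert, mem_singleton]
        exact ⟨fun hy => h x y hy.2.symm, fun hy => ⟨mem_univ y, derivative_eq_of_paired G hy⟩⟩
      exact Or.inr ((congrArg card hfiber).trans (hcard x))
    · exact Or.inl (card_eq_zero.mpr (filter_eq_empty_iff.mpr fun x _ => not_exists.mp hb x))

end

section

variable {K : Type*} [Field K]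

lemma inv_add_inv_eq_inv_add_iff {a b : K} (ha : a ≠ 0) (hb : b ≠ 0) (hab : a + b ≠ 0) :
    a⁻¹ + b⁻¹ = (a + b)⁻¹ ↔ a ^ 2 + a * b + b ^ 2 = 0 := by
  rw [inv_add_inv ha hb, inv_eq_one_div, div_eq_div_iff (mul_ne_zero ha hb) hab]
  constructor <;> intro h <;> linear_combination h

variable [CharP K 2]

lemma inv_add_inv_add_eq_div {a x : K} (hx : x ≠ 0) (hxa : x + a ≠ 0) :
    x⁻¹ + (x + a)⁻¹ = a / (x * (x + a)) := by
  field_simp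
  linear_combination x * CharTwo.two_eq_zero (R := K)

lemma paired_of_inv_add_inv_add_eq {a x y : K} (ha : a ≠ 0) (hx : x ≠ 0) (hxa : x + a ≠ 0)
    (hy : y ≠ 0) (hya : y + a ≠ 0) (h : x⁻¹ + (x + a)⁻¹ = y⁻¹ + (y + a)⁻¹) : Paired a x y := by
  rw [inv_add_inv_add_eq_div hx hxa, inv_add_inv_add_eq_div hy hya, div_eq_div_iff (by positivity)
    (by positivity), mul_right_inj' ha] at h
  have : (y + x) * (y + x + a) = 0 := by
    linear_combination h + (x * y + x ^ 2 + x * a) * CharTwo.two_eq_zero (R := K)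
  rcases mul_eq_zero.mp this with h | h
  · exact Or.inl (CharTwo.add_eq_zero.mp h)
  · exact Or.inr (by linear_combination h - (x + a) * CharTwo.two_eq_zero (R := K))

lemma exists_inv_add_inv_add_eq_iff {a c : K} (ha : a ≠ 0) (hc : c ≠ 0) :
    (∃ x, x ≠ 0 ∧ x + a ≠ 0 ∧ x⁻¹ + (x + a)⁻¹ = c) ↔ ∃ t, t ^ 2 + t = (a * c)⁻¹ := by
  constructor
  · rintro ⟨x, hx, hxa, rfl⟩
    refine ⟨x / a, ?_⟩
    rw [inv_add_inv_add_eq_div hx hxa]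
    field_simp
  · rintro ⟨t, ht⟩
    have htt : t * (t + 1) ≠ 0 := by
      rw [mul_add_one, ← sq, ht]
      exact inv_ne_zero (mul_ne_zero ha hc)
    obtain ⟨ht0, ht1⟩ := mul_ne_zero_iff.mp htt
    have hx : a * t ≠ 0 := mul_ne_zero ha ht0
    have hxa : a * t + a ≠ 0 := by rw [← mul_add_one]; exact mul_ne_zero ha ht1
    refine ⟨a * t, hx, hxa, ?_⟩
    have hact : a * c * (t ^ 2 + t) = 1 := by rw [ht, mul_inv_cancel₀ (mul_ne_zero ha hc)]
    rw [inv_add_inv_add_eq_div hx hxa, div_eq_iff (mul_ne_zero hx hxa)]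
    linear_combination (-a) * hact

lemma sq_add_mul_add_sq_eq_zero_iff {ω : K} (hω : ω ^ 2 = ω + 1) (a b : K) :
    b ^ 2 + b * a + a ^ 2 = 0 ↔ a = b * ω ∨ a = b * ω ^ 2 := by
  have h2 := CharTwo.two_eq_zero (R := K)
  rw [show b ^ 2 + b * a + a ^ 2 = (a + b * ω) * (a + b * ω ^ 2) by
    linear_combination (-(a * b) - b ^ 2 * (ω + 1)) * hω - (a * b * ω + b ^ 2 * ω) * h2,
    mul_eq_zero, CharTwo.add_eq_zero, CharTwo.add_eq_zero]

lemma Tr_add (n : ℕ) (x y : K) : Tr n (x + y) = Tr n x + Tr n y := by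
  simp only [Tr, ← Finset.sum_add_distrib, add_pow_char_pow]

lemma Tr_one_of_even {n : ℕ} (hn : Even n) : Tr n (1 : K) = 0 := by
  simpa [Tr] using (CharP.cast_eq_zero_iff K 2 n).mpr hn.two_dvd

end

section

variable {K : Type*} [Field K] [Fintype K] {n : ℕ}

lemma Tr_sq (hcard : Fintype.card K = 2 ^ n) (z : K) : Tr n (z ^ 2) = Tr n z := by
  have h : Tr n (z ^ 2) + z ^ 2 ^ 0 = Tr n z + z ^ 2 ^ n := by
    simp only [Tr, ← pow_mul, ← pow_succ']
    rw [← Finset.sum_range_succ' (fun i => z ^ 2 ^ i), Finset.sum_range_succ]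
  rwa [← hcard, FiniteField.pow_card, pow_zero, pow_one, add_left_inj] at h

open Polynomial in
lemma two_mul_card_filter_Tr_eq_zero_le [DecidableEq K] (hcard : Fintype.card K = 2 ^ n) :
    2 * #{z : K | Tr n z = 0} ≤ Fintype.card K := by
  obtain ⟨m, rfl⟩ : ∃ m, n = m + 1 := by
    refine Nat.exists_eq_succ_of_ne_zero fun hn => ?_
    have := Fintype.one_lt_card (α := K)
    simp_all
  have hlow : (∑ i ∈ range m, (X : K[X]) ^ 2 ^ i).degree < (2 ^ m : ℕ) := by
    refine (degree_sum_le _ _).trans_lt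
      ((Finset.sup_lt_iff (WithBot.bot_lt_coe _)).mpr fun i hi => ?_)
    rw [degree_X_pow]
    exact_mod_cast Nat.pow_lt_pow_right one_lt_two (mem_range.mp hi)
  set p : K[X] := ∑ i ∈ range (m + 1), X ^ 2 ^ i with hp_def
  have hp : p = X ^ 2 ^ m + ∑ i ∈ range m, (X : K[X]) ^ 2 ^ i := by
    rw [hp_def, Finset.sum_range_succ, add_comm]
  have hmonic : p.Monic := hp ▸ monic_X_pow_add hlow
  have hdeg : p.natDegree = 2 ^ m := by
    rw [hp, natDegree_add_eq_left_of_degree_lt (by simpa using hlow), natDegree_X_pow]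
  have hroots : #{z : K | Tr (m + 1) z = 0} ≤ p.natDegree := by
    refine card_le_degree_of_subset_roots fun z hz => ?_
    rw [mem_roots hmonic.ne_zero, IsRoot, hp_def, eval_finsetSum]
    simpa [Tr] using (mem_filter.mp hz).2
  rw [hcard, pow_succ]
  omega

variable [CharP K 2]

lemma Tr_eq_zero_or_one (hcard : Fintype.card K = 2 ^ n) (z : K) : Tr n z = 0 ∨ Tr n z = 1 := by
  have h : Tr n z ^ 2 = Tr n z := calc
    Tr n z ^ 2 = Tr n (z ^ 2) := by
      unfold Tr
      rw [CharTwo.sum_sq]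
      exact Finset.sum_congr rfl fun i _ => pow_right_comm z _ _
    _ = Tr n z := Tr_sq hcard z
  have : Tr n z * (Tr n z - 1) = 0 := by linear_combination h
  simpa [sub_eq_zero] using this

lemma Tr_sq_add_self (hcard : Fintype.card K = 2 ^ n) (x : K) : Tr n (x ^ 2 + x) = 0 := by
  rw [Tr_add, Tr_sq hcard, CharTwo.add_self_eq_zero]

open Polynomial in
lemma Tr_eq_zero_iff_exists_sq_add_self_eq (hcard : Fintype.card K = 2 ^ n) (c : K) :
    Tr n c = 0 ↔ ∃ x, x ^ 2 + x = c := by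
  classical
  refine ⟨fun hc => ?_, fun ⟨x, hx⟩ => hx ▸ Tr_sq_add_self hcard x⟩
  set S := univ.image fun x : K => x ^ 2 + x
  set T : Finset K := {z | Tr n z = 0}
  have hST : S ⊆ T := by
    intro z
    simp only [S, T, mem_image, mem_filter, mem_univ, true_and]
    rintro ⟨x, rfl⟩
    exact Tr_sq_add_self hcard x
  have hS : Fintype.card K ≤ 2 * #S := by
    have hX : (X ^ 2 + X : K[X]).natDegree = 2 := by compute_degree!
    have h := FiniteField.card_image_polynomial_eval (p := (X ^ 2 + X : K[X]))
      (by rw [degree_eq_natDegree (by rintro h; simp [h] at hX), hX]; decide)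
    rw [hX] at h
    simpa [S] using h
  have hT : 2 * #T ≤ Fintype.card K := by convert two_mul_card_filter_Tr_eq_zero_le hcard
  have hc : c ∈ S := by
    rw [eq_of_subset_of_card_le hST (by omega)]
    simpa [T] using hc
  simpa [S] using hc

lemma Tr_eq_one_iff_not_exists_sq_add_self_eq (hcard : Fintype.card K = 2 ^ n) (c : K) :
    Tr n c = 1 ↔ ¬∃ x, x ^ 2 + x = c := by
  rw [← Tr_eq_zero_iff_exists_sq_add_self_eq hcard]
  rcases Tr_eq_zero_or_one hcard c with h | h <;> simp [h]

end

section

variable {K : Type*} [Field K] [DecidableEq K] {α a : K}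

lemma Fmod_of_ne {x : K} (hx0 : x ≠ 0) (hxα : x ≠ α) : Fmod α x = x⁻¹ := by
  simp [Fmod, hx0, hxα]

lemma Fmod_zero : Fmod α 0 = α⁻¹ := if_pos rfl

lemma Fmod_self : Fmod α α = 0 := by
  by_cases hα : α = 0 <;> simp [Fmod, hα]

lemma derivative_Fmod_zero (ha : a ≠ 0) (haα : a ≠ α) :
    derivative (Fmod α) a 0 = α⁻¹ + a⁻¹ := by
  rw [derivative, zero_add, Fmod_zero, Fmod_of_ne ha haα]

variable [CharP K 2]

lemma derivative_Fmod_self (ha : a ≠ 0) (haα : a ≠ α) :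
    derivative (Fmod α) a α = (α + a)⁻¹ := by
  have hαa : α + a ≠ 0 := fun h => haα (CharTwo.add_eq_zero.mp h).symm
  rw [derivative, Fmod_self, zero_add, Fmod_of_ne hαa (by simpa using ha)]

lemma derivative_Fmod_of_not_paired {x : K} (h0 : ¬Paired a 0 x) (hα : ¬Paired a α x) :
    derivative (Fmod α) a x = x⁻¹ + (x + a)⁻¹ := by
  simp only [Paired, not_or, zero_add] at h0 hα
  rw [derivative, Fmod_of_ne h0.1 hα.1, Fmod_of_ne (by rw [Ne, CharTwo.add_eq_zero]; exact h0.2)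
    (by rw [Ne, CharTwo.add_eq_iff_eq_add]; exact hα.2)]

lemma exists_derivative_Fmod_eq_iff (ha : a ≠ 0) {c : K} (hc : c ≠ 0)
    (hcα : c ≠ α⁻¹ + (α + a)⁻¹) :
    (∃ x, ¬Paired a 0 x ∧ ¬Paired a α x ∧ derivative (Fmod α) a x = c) ↔
      ∃ t, t ^ 2 + t = (a * c)⁻¹ := by
  rw [← exists_inv_add_inv_add_eq_iff ha hc]
  constructor
  · rintro ⟨x, h0, hα, hx⟩
    exact ⟨x, (not_paired_zero_iff.mp h0).1, (not_paired_zero_iff.mp h0).2,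
      derivative_Fmod_of_not_paired h0 hα ▸ hx⟩
  · rintro ⟨x, hx0, hxa, hx⟩
    have hα : ¬Paired a α x := fun h => hcα (hx ▸ derivative_eq_of_paired (·⁻¹) h)
    have h0 : ¬Paired a 0 x := not_paired_zero_iff.mpr ⟨hx0, hxa⟩
    exact ⟨x, h0, hα, derivative_Fmod_of_not_paired h0 hα ▸ hx⟩

lemma derivative_Fmod_zero_eq_self_iff {ω : K} (hω : ω ^ 2 = ω + 1) (hα : α ≠ 0) (ha : a ≠ 0)
    (haα : a ≠ α) :
    derivative (Fmod α) a 0 = derivative (Fmod α) a α ↔ a = α * ω ∨ a = α * ω ^ 2 := by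
  have hαa : α + a ≠ 0 := fun h => haα (CharTwo.add_eq_zero.mp h).symm
  rw [derivative_Fmod_zero ha haα, derivative_Fmod_self ha haα,
    inv_add_inv_eq_inv_add_iff hα ha hαa, sq_add_mul_add_sq_eq_zero_iff hω]

variable [Fintype K]

lemma not_twoToOne_Fmod_self {ω : K} (hω : ω ^ 2 = ω + 1) (hα : α ≠ 0) :
    ¬TwoToOne (Fmod α) α := by
  have hω0 : ω ≠ 0 := by
    rintro rfl
    exact one_ne_zero (by linear_combination -hω)
  have hω1 : ω ≠ 1 := by
    rintro rfl
    exact one_ne_zero (by linear_combination -hω)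
  have hx0 : α * ω ≠ 0 := mul_ne_zero hα hω0
  have hxα : α * ω ≠ α := fun h => hω1 (mul_left_cancel₀ hα (h.trans (mul_one α).symm))
  have hD : derivative (Fmod α) α (α * ω) = derivative (Fmod α) α 0 := by
    rw [derivative, derivative, Fmod_of_ne hx0 hxα,
      Fmod_of_ne (by rwa [Ne, CharTwo.add_eq_zero]) (by simpa using hx0), zero_add, Fmod_zero, Fmod_self, add_zero,
      show α * ω + α = α * ω ^ 2 by linear_combination (-α) * hω]
    field_simp
    linear_combination -hω
  rw [twoToOne_iff hα]
  intro h
  rcases h 0 (α * ω) hD.symm with h | h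
  · exact hx0 h
  · exact hxα (h.trans (zero_add α))

lemma twoToOne_Fmod_iff (ha : a ≠ 0) :
    TwoToOne (Fmod α) a ↔
      (∀ y, derivative (Fmod α) a y = derivative (Fmod α) a 0 → Paired a 0 y) ∧
        ∀ y, derivative (Fmod α) a y = derivative (Fmod α) a α → Paired a α y := by
  rw [twoToOne_iff ha]
  refine ⟨fun h => ⟨fun y hy => h 0 y hy.symm, fun y hy => h α y hy.symm⟩, ?_⟩
  rintro ⟨h0, hα⟩ x y hxy
  have hspecial (u x y : K)
      (hu : ∀ z, derivative (Fmod α) a z = derivative (Fmod α) a u → Paired a u z)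
      (hx : Paired a u x) (hxy : derivative (Fmod α) a x = derivative (Fmod α) a y) :
      Paired a x y :=
    hx.symm.trans (hu y (hxy.symm.trans (derivative_eq_of_paired _ hx)))
  by_cases hx0 : Paired a 0 x
  · exact hspecial 0 x y h0 hx0 hxy
  by_cases hxα : Paired a α x
  · exact hspecial α x y hα hxα hxy
  by_cases hy0 : Paired a 0 y
  · exact (hspecial 0 y x h0 hy0 hxy.symm).symm
  by_cases hyα : Paired a α y
  · exact (hspecial α y x hα hyα hxy.symm).symm
  rw [derivative_Fmod_of_not_paired hx0 hxα, derivative_Fmod_of_not_paired hy0 hyα] at hxy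
  obtain ⟨hx0', hxa⟩ := not_paired_zero_iff.mp hx0
  obtain ⟨hy0', hya⟩ := not_paired_zero_iff.mp hy0
  exact paired_of_inv_add_inv_add_eq ha hx0' hxa hy0' hya hxy

variable {n : ℕ}

lemma forall_derivative_Fmod_ne_derivative_zero_iff (hcard : Fintype.card K = 2 ^ n)
    (hα : α ≠ 0) (ha : a ≠ 0) (haα : a ≠ α) :
    (∀ x, ¬Paired a 0 x → ¬Paired a α x →
        derivative (Fmod α) a x ≠ derivative (Fmod α) a 0) ↔
      Tr n (α / (a + α)) = 1 := by
  have hc0 : α⁻¹ + a⁻¹ ≠ 0 := by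
    rw [Ne, CharTwo.add_eq_zero, inv_inj]
    exact haα.symm
  have hcα : α⁻¹ + a⁻¹ ≠ α⁻¹ + (α + a)⁻¹ := by
    rw [Ne, add_right_inj, inv_inj]
    intro h
    exact hα (by linear_combination -h)
  have hval : (a * (α⁻¹ + a⁻¹))⁻¹ = α / (a + α) := by
    field_simp
  rw [derivative_Fmod_zero ha haα, Tr_eq_one_iff_not_exists_sq_add_self_eq hcard, ← hval,
    ← exists_derivative_Fmod_eq_iff ha hc0 hcα]
  simp only [not_exists, not_and]

lemma forall_derivative_Fmod_ne_derivative_self_iff (hcard : Fintype.card K = 2 ^ n)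
    (heven : Even n) (hα : α ≠ 0) (ha : a ≠ 0) (haα : a ≠ α) :
    (∀ x, ¬Paired a 0 x → ¬Paired a α x →
        derivative (Fmod α) a x ≠ derivative (Fmod α) a α) ↔
      Tr n (α / a) = 1 := by
  have hαa : α + a ≠ 0 := fun h => haα (CharTwo.add_eq_zero.mp h).symm
  have hcα : (α + a)⁻¹ ≠ α⁻¹ + (α + a)⁻¹ := by
    rw [Ne, right_eq_add]
    exact inv_ne_zero hα
  have hTr : Tr n (α / a) = Tr n (a * (α + a)⁻¹)⁻¹ := by
    rw [show (a * (α + a)⁻¹)⁻¹ = α / a + 1 by field_simp, Tr_add, Tr_one_of_even heven, add_zero]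
  rw [derivative_Fmod_self ha haα, hTr, Tr_eq_one_iff_not_exists_sq_add_self_eq hcard,
    ← exists_derivative_Fmod_eq_iff ha (inv_ne_zero hαa) hcα]
  simp only [not_exists, not_and]

end

theorem stmt_9_general (n : ℕ) (heven : Even n)
    [CharP F 2] (hcard : Fintype.card F = 2 ^ n)
    (α : F) (hα : α ≠ 0) (ω : F) (hω : ω ^ 2 = ω + 1) :
    ∀ a : F, a ≠ 0 →
      (TwoToOne (Fmod α) a ↔
        (a ≠ α ∧ a ≠ α * ω ∧ a ≠ α * ω ^ 2 ∧
          Tr n (α / (a + α)) = 1 ∧ Tr n (α / a) = 1)) := by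
  intro a ha
  obtain rfl | haα := eq_or_ne a α
  · simp [not_twoToOne_Fmod_self hω hα]
  have h0α : ¬Paired a 0 α := by simp [Paired, hα, haα.symm]
  rw [twoToOne_Fmod_iff ha, forall_derivative_eq_imp_paired_iff _ h0α,
    forall_derivative_eq_imp_paired_iff _ fun h => h0α h.symm,
    forall_congr' fun _ => Imp.swap (b := ¬Paired a 0 _),
    forall_derivative_Fmod_ne_derivative_zero_iff hcard hα ha haα,
    forall_derivative_Fmod_ne_derivative_self_iff hcard heven hα ha haα, ne_comm, Ne,
    derivative_Fmod_zero_eq_self_iff hω hα ha haα]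
  tauto

/-- the row spectrum of `F_{0,α}` for even `n ≥ 4`. -/
theorem stmt_9 (n : ℕ) (hn : 4 ≤ n) (heven : Even n)
    [CharP F 2] (hcard : Fintype.card F = 2 ^ n)
    (α : F) (hα : α ≠ 0) (ω : F) (hω : ω ^ 2 = ω + 1) :
    ∀ a : F, a ≠ 0 →
      (TwoToOne (Fmod α) a ↔
        (a ≠ α ∧ a ≠ α * ω ∧ a ≠ α * ω ^ 2 ∧
          Tr n (α / (a + α)) = 1 ∧ Tr n (α / a) = 1)) :=
  stmt_9_general n heven hcard α hα ω hω

end APNPaper
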